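/- arXiv:1902.08313 — 2 statements merged into one kernel-verified Lean document; each statement's English description precedes it below -/
import Mathlib

section
/- Let W be a real inner product space, let f, r : W → ℝ be convex functions with f ≥ 0 and r ≥ 0, and let A, G > 0 and η ≥ 0. Let w*, w_t ∈ W, let g_f be a subgradient of f at w_t with ‖g_f‖² ≤ A·f(w_t) + G², set w_{t+1} = w_t − η·g_f − η·g_r where g_r is a subgradient of r at w_{t+1} with ‖g_r‖² ≤ A·r(w_{t+1}) + G². Then for every constant c with c ≥ 7/2 one has: 2η(1 − cAη)·f(w_t) + 2η(1 − cAη)·r(w_{t+1}) ≤ 2η·f(w*) + 2η·r(w*) + ‖w_t − w*‖² − ‖w_{t+1} − w*‖² + 8η²G². (The paper states this for a constant c ≤ 4; the proof establishes it whenever the coefficient c dominates 7/2, in particular for c = 4.) -/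
open RealInnerProductSpace

/-- per-iteration bound for the proximal subgradient descent step. -/
theorem stmt_1 {W : Type*} [NormedAddCommGroup W] [InnerProductSpace ℝ W]
    (f r : W → ℝ) (hf : ConvexOn ℝ Set.univ f) (hr : ConvexOn ℝ Set.univ r)
    (hf0 : ∀ w, 0 ≤ f w) (hr0 : ∀ w, 0 ≤ r w)
    (A G : ℝ) (hA : 0 < A) (hG : 0 < G) (η : ℝ) (hη : 0 ≤ η)
    (wstar wt wt1 gf gr : W)
    (hgf : ∀ v, f wt + ⟪gf, v - wt⟫ ≤ f v)
    (hgfB : ‖gf‖ ^ 2 ≤ A * f wt + G ^ 2)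
    (hupd : wt1 = wt - η • gf - η • gr)
    (hgr : ∀ v, r wt1 + ⟪gr, v - wt1⟫ ≤ r v)
    (hgrB : ‖gr‖ ^ 2 ≤ A * r wt1 + G ^ 2)
    (c : ℝ) (hc : 7 / 2 ≤ c) :
    2 * η * (1 - c * A * η) * f wt + 2 * η * (1 - c * A * η) * r wt1 ≤
      2 * η * f wstar + 2 * η * r wstar + ‖wt - wstar‖ ^ 2 - ‖wt1 - wstar‖ ^ 2
        + 8 * η ^ 2 * G ^ 2 := by
  have hgf' := hgf wstar
  have hgr' := hgr wstar
  obtain ⟨a, ha⟩ : ∃ x : ℝ, x = ⟪gf, wt - wstar⟫ := ⟨_, rfl⟩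
  obtain ⟨b, hb⟩ : ∃ x : ℝ, x = ⟪gr, wt - wstar⟫ := ⟨_, rfl⟩
  obtain ⟨p, hp⟩ : ∃ x : ℝ, x = ⟪gf, gr⟫ := ⟨_, rfl⟩
  have h1 : ⟪gf, wstar - wt⟫ = -a := by
    rw [ha, ← inner_neg_right]; congr 1; abel
  have h2 : ⟪gr, wstar - wt1⟫ = -b + η * p + η * ‖gr‖ ^ 2 := by
    have : wstar - wt1 = -(wt - wstar) + η • gf + η • gr := by
      rw [hupd]; abel
    rw [hb, hp, this, inner_add_right, inner_add_right, inner_neg_right,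
      real_inner_smul_right, real_inner_smul_right, real_inner_comm gr gf,
      real_inner_self_eq_norm_sq]
  have hx : wt1 - wstar = (wt - wstar) - (η • gf + η • gr) := by
    rw [hupd]; abel
  have hnorm : ‖wt1 - wstar‖ ^ 2 = ‖wt - wstar‖ ^ 2 - 2 * (η * a + η * b)
      + (η ^ 2 * ‖gf‖ ^ 2 + 2 * (η * η) * p + η ^ 2 * ‖gr‖ ^ 2) := by
    rw [hx]
    simp only [norm_sub_sq_real, norm_add_sq_real, inner_add_right,
      real_inner_smul_right, real_inner_smul_left, norm_smul,
      Real.norm_eq_abs, mul_pow, sq_abs]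
    rw [real_inner_comm gf (wt - wstar), real_inner_comm gr (wt - wstar), ← ha, ← hb, ← hp]
    ring
  rw [h1] at hgf'
  rw [h2] at hgr'
  nlinarith [sq_nonneg ‖gr‖, mul_nonneg hη hη, mul_nonneg (mul_nonneg hη hη) (hf0 wt),
    mul_nonneg (mul_nonneg hη hη) (hr0 wt1), sq_nonneg G,
    mul_le_mul_of_nonneg_left hgfB (mul_nonneg hη hη),
    mul_le_mul_of_nonneg_left hgf' (mul_nonneg (by norm_num : (0:ℝ) ≤ 2) hη),
    mul_le_mul_of_nonneg_left hgr' (mul_nonneg (by norm_num : (0:ℝ) ≤ 2) hη),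
    mul_nonneg (mul_nonneg (mul_nonneg hη hη) hA.le) (hf0 wt),
    mul_nonneg (mul_nonneg (mul_nonneg hη hη) hA.le) (hr0 wt1),
    mul_nonneg (mul_nonneg hη hη) (sq_nonneg ‖gr‖)]
end

section
/- Let W be a real inner product space, let f, r : W → ℝ be convex functions with f ≥ 0, r ≥ 0 and r(0) = 0, and let A, G, D > 0. Let w* ∈ W satisfy ‖w*‖ ≤ D. Fix an integer T ≥ 1 and set the step length η = D/(√(8T)·G). Let c ≥ 7/2 be a constant such that 1 − cAη > 0. Define iterates by w_1 = 0 and, for t = 1,…,T, w_{t+1} = w_t − η·g^f_t − η·g^r_{t+1}, where g^f_t is a subgradient of f at w_t with ‖g^f_t‖² ≤ A·f(w_t) + G², and g^r_{t+1} is a subgradient of r at w_{t+1} with ‖g^r_{t+1}‖² ≤ A·r(w_{t+1}) + G². Then: min_{t ∈ {1,…,T}} [f(w_t) + r(w_t)] ≤ (1/T)·Σ_{t=1}^T [f(w_t) + r(w_t)] ≤ 2√2·D·G/(√T·(1 − cAD/(G√(8T)))) + (f(w*) + r(w*))/(1 − cAD/(G√(8T))). (The paper states this for a constant c ≤ 4;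 the proof establishes it whenever c dominates 7/2, in particular for c = 4.) -/
open RealInnerProductSpace

set_option maxHeartbeats 1000000
open RealInnerProductSpace

lemma psd_step {W : Type*} [NormedAddCommGroup W] [InnerProductSpace ℝ W]
    (f r : W → ℝ) (A G η : ℝ) (hη : 0 < η) (wstar : W)
    (x y a b : W)
    (hupd : y = x - η • a - η • b)
    (hgf : f x + ⟪a, wstar - x⟫ ≤ f wstar)
    (hgfB : ‖a‖ ^ 2 ≤ A * f x + G ^ 2)
    (hgr : r y + ⟪b, wstar - y⟫ ≤ r wstar) :
    2*η*(f x) + 2*η*(r y) + ‖y - wstar‖^2 ≤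
      ‖x - wstar‖^2 + 2*η*(f wstar + r wstar) + η^2*(A * f x + G^2) := by
  have hy : y - wstar = (x - wstar) - η • (a + b) := by
    rw [hupd]; rw [smul_add]; abel
  have e1 : ⟪x - wstar, a⟫ = ⟪a, x⟫ - ⟪a, wstar⟫ := by
    rw [real_inner_comm, inner_sub_right]
  have e2 : ⟪x - wstar, b⟫ = ⟪b, x⟫ - ⟪b, wstar⟫ := by
    rw [real_inner_comm, inner_sub_right]
  have hexp : ‖y - wstar‖^2
      = ‖x - wstar‖^2 - 2*(η*((⟪a, x⟫ - ⟪a, wstar⟫) + (⟪b, x⟫ - ⟪b, wstar⟫)))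
        + η^2*(‖a‖^2 + 2*⟪a,b⟫ + ‖b‖^2) := by
    rw [hy, norm_sub_sq_real, real_inner_smul_right, inner_add_right,
      norm_smul, Real.norm_eq_abs, mul_pow, sq_abs, norm_add_sq_real, e1, e2]
  have hgf' : f x + (⟪a, wstar⟫ - ⟪a, x⟫) ≤ f wstar := by
    rwa [inner_sub_right] at hgf
  have hgr' : r y + (⟪b, wstar⟫ - ⟪b, y⟫) ≤ r wstar := by
    rwa [inner_sub_right] at hgr
  have hby : ⟪b, y⟫ = ⟪b, x⟫ - η*⟪a,b⟫ - η*‖b‖^2 := by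
    rw [hupd, inner_sub_right, inner_sub_right, real_inner_smul_right,
      real_inner_smul_right, real_inner_self_eq_norm_sq, real_inner_comm b a]
  have h1 : f x - f wstar ≤ ⟪a, x⟫ - ⟪a, wstar⟫ := by linarith
  have h2 : r y - r wstar ≤ (⟪b, x⟫ - ⟪b, wstar⟫) - η*(⟪a,b⟫ + ‖b‖^2) := by
    rw [hby] at hgr'; linarith
  have hb2 : (0:ℝ) ≤ ‖b‖^2 := sq_nonneg _
  rw [hexp]
  nlinarith [mul_le_mul_of_nonneg_left h1 (by linarith : (0:ℝ) ≤ 2*η),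
    mul_le_mul_of_nonneg_left h2 (by linarith : (0:ℝ) ≤ 2*η),
    mul_le_mul_of_nonneg_left hgfB (sq_nonneg η),
    mul_nonneg (sq_nonneg η) hb2]


/-- overall convergence bound of the PSD algorithm with step
length `η = D/(√(8T)·G)`. -/
theorem stmt_2 {W : Type*} [NormedAddCommGroup W] [InnerProductSpace ℝ W]
    (f r : W → ℝ) (hf : ConvexOn ℝ Set.univ f) (hr : ConvexOn ℝ Set.univ r)
    (hf0 : ∀ w, 0 ≤ f w) (hr0 : ∀ w, 0 ≤ r w) (hr00 : r 0 = 0)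
    (A G D : ℝ) (hA : 0 < A) (hG : 0 < G) (hD : 0 < D)
    (T : ℕ) (hT : 1 ≤ T)
    (η : ℝ) (hη : η = D / (Real.sqrt (8 * T) * G))
    (c : ℝ) (hc : 7 / 2 ≤ c) (hcAη : 0 < 1 - c * A * η)
    (wstar : W) (hws : ‖wstar‖ ≤ D)
    (w gf gr : ℕ → W) (hw1 : w 1 = 0)
    (hupd : ∀ t ∈ Finset.Icc 1 T, w (t + 1) = w t - η • gf t - η • gr (t + 1))
    (hgf : ∀ t ∈ Finset.Icc 1 T, ∀ v, f (w t) + ⟪gf t, v - w t⟫ ≤ f v)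
    (hgfB : ∀ t ∈ Finset.Icc 1 T, ‖gf t‖ ^ 2 ≤ A * f (w t) + G ^ 2)
    (hgr : ∀ t ∈ Finset.Icc 1 T, ∀ v,
      r (w (t + 1)) + ⟪gr (t + 1), v - w (t + 1)⟫ ≤ r v)
    (hgrB : ∀ t ∈ Finset.Icc 1 T, ‖gr (t + 1)‖ ^ 2 ≤ A * r (w (t + 1)) + G ^ 2) :
    (Finset.Icc 1 T).inf' (Finset.nonempty_Icc.mpr hT)
        (fun t => f (w t) + r (w t)) ≤
      (1 / (T : ℝ)) * ∑ t ∈ Finset.Icc 1 T, (f (w t) + r (w t)) ∧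
    (1 / (T : ℝ)) * ∑ t ∈ Finset.Icc 1 T, (f (w t) + r (w t)) ≤
      2 * Real.sqrt 2 * D * G /
          (Real.sqrt T * (1 - c * A * D / (G * Real.sqrt (8 * T)))) +
        (f wstar + r wstar) / (1 - c * A * D / (G * Real.sqrt (8 * T))) := by
  have hTpos : (0:ℝ) < T := by exact_mod_cast Nat.lt_of_lt_of_le Nat.zero_lt_one hT
  set u := Real.sqrt 2 with hu
  set s := Real.sqrt (T:ℝ) with hs
  have hu0 : 0 < u := Real.sqrt_pos.mpr (by norm_num)
  have hs0 : 0 < s := Real.sqrt_pos.mpr hTpos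
  have hu2 : u^2 = 2 := Real.sq_sqrt (by norm_num)
  have hs2 : s^2 = (T:ℝ) := Real.sq_sqrt hTpos.le
  have hq8 : Real.sqrt (8*(T:ℝ)) = 2*u*s := by
    rw [Real.sqrt_mul (by norm_num : (0:ℝ) ≤ 8),
      show (8:ℝ) = 2^2*2 by norm_num,
      Real.sqrt_mul (by positivity), Real.sqrt_sq (by norm_num : (0:ℝ) ≤ 2)]
  have hη' : η = D/(2*u*s*G) := by rw [hη, hq8]
  have hη0 : 0 < η := by rw [hη']; positivity
  -- per-step
  have key : ∀ t ∈ Finset.Icc 1 T,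
      2*η*(f (w t)) + 2*η*(r (w (t+1))) + ‖w (t+1) - wstar‖^2 ≤
      ‖w t - wstar‖^2 + 2*η*(f wstar + r wstar) + η^2*(A * f (w t) + G^2) :=
    fun t ht => psd_step f r A G η hη0 wstar _ _ _ _ (hupd t ht)
      (hgf t ht wstar) (hgfB t ht) (hgr t ht wstar)
  have sumkey := Finset.sum_le_sum key
  set Sf := ∑ t ∈ Finset.Icc 1 T, f (w t) with hSf
  set Sr := ∑ t ∈ Finset.Icc 1 T, r (w t) with hSr
  set Sr' := ∑ t ∈ Finset.Icc 1 T, r (w (t+1)) with hSr'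
  set Φ := ∑ t ∈ Finset.Icc 1 T, ‖w t - wstar‖^2 with hΦ
  set Φ' := ∑ t ∈ Finset.Icc 1 T, ‖w (t+1) - wstar‖^2 with hΦ'
  have hcard : (Finset.Icc 1 T).card = T := by rw [Nat.card_Icc]; omega
  have hsum1 : ∑ t ∈ Finset.Icc 1 T,
      (2*η*(f (w t)) + 2*η*(r (w (t+1))) + ‖w (t+1) - wstar‖^2)
      = 2*η*Sf + 2*η*Sr' + Φ' := by
    rw [Finset.sum_add_distrib, Finset.sum_add_distrib, ← Finset.mul_sum, ← Finset.mul_sum]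
  have hsum2 : ∑ t ∈ Finset.Icc 1 T,
      (‖w t - wstar‖^2 + 2*η*(f wstar + r wstar) + η^2*(A * f (w t) + G^2))
      = Φ + (T:ℝ)*(2*η*(f wstar + r wstar) + η^2*G^2) + η^2*A*Sf := by
    rw [Finset.sum_congr rfl (fun t _ => by
      show _ = ‖w t - wstar‖^2 + (2*η*(f wstar + r wstar) + η^2*G^2) + (η^2*A)*(f (w t))
      ring)]
    rw [Finset.sum_add_distrib, Finset.sum_add_distrib, Finset.sum_const, ← Finset.mul_sum,
      hcard, nsmul_eq_mul]
  rw [hsum1, hsum2] at sumkey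
  -- telescoping
  have conv : ∀ g : ℕ → ℝ, ∑ t ∈ Finset.Icc 1 T, g t = ∑ i ∈ Finset.range T, g (1+i) := by
    intro g
    rw [← Finset.Ico_add_one_right_eq_Icc, Finset.sum_Ico_eq_sum_range]
    simp
  have telφ : Φ - Φ' = ‖w 1 - wstar‖^2 - ‖w (T+1) - wstar‖^2 := by
    rw [hΦ, hΦ', ← Finset.sum_sub_distrib, conv]
    have h := Finset.sum_range_sub' (fun i => ‖w (1+i) - wstar‖^2) T
    simpa [Nat.add_comm] using h
  have telr : Sr' - Sr = r (w (T+1)) - r (w 1) := by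
    rw [hSr', hSr, ← Finset.sum_sub_distrib, conv]
    have h := Finset.sum_range_sub (fun i => r (w (1+i))) T
    simpa [Nat.add_comm] using h
  have hφ1 : ‖w 1 - wstar‖^2 ≤ D^2 := by
    rw [hw1, zero_sub, norm_neg]
    exact pow_le_pow_left₀ (norm_nonneg _) hws 2
  have hφT : (0:ℝ) ≤ ‖w (T+1) - wstar‖^2 := sq_nonneg _
  have hr1 : r (w 1) = 0 := by rw [hw1, hr00]
  have hrT : (0:ℝ) ≤ r (w (T+1)) := hr0 _
  have hSf0 : 0 ≤ Sf := Finset.sum_nonneg fun t _ => hf0 _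
  have hSr0 : 0 ≤ Sr := Finset.sum_nonneg fun t _ => hr0 _
  have hsplit : ∑ t ∈ Finset.Icc 1 T, (f (w t) + r (w t)) = Sf + Sr :=
    Finset.sum_add_distrib
  rw [hsplit]
  clear_value Sf Sr Sr' Φ Φ'
  -- master inequality
  have e1 : 2*η*Sr ≤ 2*η*Sr' := by
    have h0 : 0 ≤ Sr' - Sr := by rw [telr, hr1]; linarith
    have h := mul_nonneg hη0.le h0
    linarith [h]
  have e2 : Φ ≤ Φ' + D^2 := by linarith [telφ]
  have master : 2*η*Sf + 2*η*Sr - η^2*A*Sf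
      ≤ D^2 + 2*η*(T:ℝ)*(f wstar + r wstar) + η^2*(T:ℝ)*G^2 := by
    linarith [sumkey, e1, e2, hφT]
  have hASr : 0 ≤ η^2*A*Sr := mul_nonneg (mul_nonneg (sq_nonneg η) hA.le) hSr0
  have master2 : 2*η*(Sf+Sr) - η^2*A*(Sf+Sr)
      ≤ D^2 + 2*η*(T:ℝ)*(f wstar + r wstar) + η^2*(T:ℝ)*G^2 := by
    linarith [master, hASr]
  have hκ : 0 < 1 - c*A*η := hcAη
  have hX0 : 0 ≤ Sf + Sr := by linarith
  have hκstep : 2*η*((1 - c*A*η)*(Sf+Sr)) ≤ 2*η*(Sf+Sr) - η^2*A*(Sf+Sr) := by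
    have h2c : (0:ℝ) ≤ 2*c - 1 := by linarith
    linarith [mul_nonneg (mul_nonneg (mul_nonneg h2c hA.le) (sq_nonneg η)) hX0]
  have key3 : 2*η*((1 - c*A*η)*(Sf+Sr))
      ≤ D^2 + 2*η*(T:ℝ)*(f wstar + r wstar) + η^2*(T:ℝ)*G^2 := by
    linarith [hκstep, master2]
  have hfrbound : (1 - c*A*η)*(Sf+Sr)
      ≤ D^2/(2*η) + (T:ℝ)*(f wstar + r wstar) + η*(T:ℝ)*G^2/2 := by
    have h2η : (0:ℝ) < 2*η := by linarith
    rw [show D^2/(2*η) + (T:ℝ)*(f wstar + r wstar) + η*(T:ℝ)*G^2/2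
        = (D^2 + 2*η*(T:ℝ)*(f wstar + r wstar) + η^2*(T:ℝ)*G^2)/(2*η) by
      field_simp]
    rw [le_div_iff₀ h2η]
    linarith [key3]
  -- numeric bound on the step-size terms
  have hnum : D^2/(2*η) + η*(T:ℝ)*G^2/2 ≤ 2*u*D*G*s := by
    rw [hη']
    have e : D^2/(2*(D/(2*u*s*G))) + (D/(2*u*s*G))*(T:ℝ)*G^2/2
        = u*s*G*D + D*(T:ℝ)*G/(4*(u*s)) := by
      field_simp
      ring
    rw [e]
    have e2' : D*(T:ℝ)*G/(4*(u*s)) = D*s*G*u/8 := by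
      rw [← hs2, div_eq_div_iff (by positivity) (by norm_num : (8:ℝ) ≠ 0)]
      linear_combination (-4*D*G*s^2) * hu2
    rw [e2']
    linarith [mul_pos (mul_pos (mul_pos hu0 hs0) hG) hD]
  have hfr2 : (1 - c*A*η)*(Sf+Sr) ≤ 2*u*D*G*s + (T:ℝ)*(f wstar + r wstar) := by
    linarith [hfrbound, hnum]
  -- denominator identification
  have hden : 1 - c * A * D / (G * Real.sqrt (8 * (T:ℝ))) = 1 - c*A*η := by
    rw [hη]; ring
  constructor
  · -- inf' ≤ average
    have hle0 : ∀ t ∈ Finset.Icc 1 T,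
        (Finset.Icc 1 T).inf' (Finset.nonempty_Icc.mpr hT) (fun t => f (w t) + r (w t))
          ≤ f (w t) + r (w t) :=
      fun t ht => Finset.inf'_le _ ht
    have hle := Finset.sum_le_sum hle0
    rw [Finset.sum_const, hcard, nsmul_eq_mul, hsplit] at hle
    have := mul_le_mul_of_nonneg_left hle (by positivity : (0:ℝ) ≤ 1/(T:ℝ))
    calc (Finset.Icc 1 T).inf' (Finset.nonempty_Icc.mpr hT) (fun t => f (w t) + r (w t))
        = (1/(T:ℝ)) * ((T:ℝ) * (Finset.Icc 1 T).inf' (Finset.nonempty_Icc.mpr hT)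
            (fun t => f (w t) + r (w t))) := by
          field_simp
      _ ≤ (1/(T:ℝ)) * (Sf + Sr) := this
  · -- main bound
    rw [hden]
    have hrhs : 2*u*D*G/(s*(1 - c*A*η)) + (f wstar + r wstar)/(1 - c*A*η)
        = (2*u*D*G/s + (f wstar + r wstar))/(1 - c*A*η) := by
      field_simp
    show (1/(T:ℝ)) * (Sf + Sr) ≤ 2*u*D*G/(s*(1 - c*A*η)) + (f wstar + r wstar)/(1 - c*A*η)
    rw [hrhs, le_div_iff₀ hκ]
    have hx : 2*u*D*G/s = 2*u*D*G*s/(T:ℝ) := by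
      rw [div_eq_div_iff hs0.ne' hTpos.ne', ← hs2]; ring
    have hmul := mul_le_mul_of_nonneg_left hfr2 (by positivity : (0:ℝ) ≤ 1/(T:ℝ))
    have hT1 : (1/(T:ℝ)) * ((T:ℝ)*(f wstar + r wstar)) = f wstar + r wstar := by
      field_simp
    have hT2 : (1/(T:ℝ)) * (2*u*D*G*s) = 2*u*D*G/s := by
      rw [hx]; field_simp
    calc (1/(T:ℝ)) * (Sf + Sr) * (1 - c*A*η)
        = (1/(T:ℝ)) * ((1 - c*A*η)*(Sf+Sr)) := by ring
      _ ≤ (1/(T:ℝ)) * (2*u*D*G*s + (T:ℝ)*(f wstar + r wstar)) := hmul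
      _ = 2*u*D*G/s + (f wstar + r wstar) := by
          rw [mul_add, hT1, hT2]
end
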